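/- arXiv:0705.3485 — 6 statements merged into one kernel-verified Lean document; each statement's English description precedes it below -/
import Mathlib

section
/- Let C be a symmetric monoidal closed category and D ⊆ C a reflective full subcategory with reflector ψ ⊣ ι and unit η. If for all B in C and D' in D the internal hom [B, D'] lies in D (i.e. η : [B,D'] → ψ[B,D'] is an isomorphism), then for all B, B' in C the map ψ(η ⊗ 1) : ψ(B ⊗ B') → ψ(ψB ⊗ B') is an isomorphism. -/
open CategoryTheory MonoidalCategory MonoidalClosed

universe v u v' u'

theorem stmt0 {C : Type u} [Category.{v} C] {D : Type u'} [Category.{v'} D]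
    [MonoidalCategory C] [SymmetricCategory C] [MonoidalClosed C]
    (ι : D ⥤ C) [Reflective ι]
    (hideal : ∀ B E : C, IsIso ((reflectorAdjunction ι).unit.app E) →
      IsIso ((reflectorAdjunction ι).unit.app ((ihom B).obj E)))
    (B B' : C) :
    IsIso ((reflector ι).map ((reflectorAdjunction ι).unit.app B ⊗ₘ 𝟙 B')) := by
  have hlocal : ∀ (E : D) (A : C),
      IsIso ((reflectorAdjunction ι).unit.app ((ihom A).obj (ι.obj E))) :=
    fun E A ↦ hideal A _ (Functor.essImage.unit_isIso (ι.obj_mem_essImage E))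
  rw [tensorHom_id]
  -- Day's reflection theorem, implication (1) → (3)
  exact (((Monoidal.Reflective.isIso_tfae (reflectorAdjunction ι)).out 0 2 :).mp hlocal) B B'
end

section
/- Let C be a symmetric monoidal closed category and D a reflective full subcategory with reflector ψ and unit η. If ψ(η_B ⊗ 1_{B'}) : ψ(B ⊗ B') → ψ(ψB ⊗ B') is an isomorphism for all B, B' in C, then for every B in C and every D'-object E (η_E iso), the internal hom [B, E] is again a D'-object, i.e. η_{[B,E]} is an isomorphism. -/
/-!
The unit `η_A : A ⟶ ψ A` of `A = [B, E]` is shown to be a split monomorphism; this suffices for a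
reflective subcategory. Since `ψ` inverts `η_A ⊗ 𝟙 B`, and hence `B ◁ η_A`, and `E` is local,
the evaluation `B ⊗ A ⟶ E` extends along `B ◁ η_A` to a map `B ⊗ ψ A ⟶ E`, whose curry is a
retraction of `η_A`.
-/

open CategoryTheory MonoidalCategory MonoidalClosed

universe v u v' u'

namespace CategoryTheory

lemma Adjunction.isLocal_essImage_iff_isIso_map {C D : Type*} [Category* C] [Category* D]
    {F : C ⥤ D} {G : D ⥤ C} (adj : G ⊣ F) [F.Full] [F.Faithful] {X Y : D} (f : X ⟶ Y) :
    F.essImage.isLocal f ↔ IsIso (G.map f) := by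
  rw [← F.isoClosure_eq_essImage, ObjectProperty.isoClosure_isLocal,
    ObjectProperty.isLocal_iff_isIso_map adj]

lemma MonoidalCategory.isIso_map_whiskerLeft_iff {C E : Type*} [Category* C] [Category* E]
    [MonoidalCategory C] [BraidedCategory C] (F : C ⥤ E) (B : C) {X Y : C} (f : X ⟶ Y) :
    IsIso (F.map (B ◁ f)) ↔ IsIso (F.map (f ▷ B)) := by
  have : B ◁ f = (β_ B X).hom ≫ f ▷ B ≫ (β_ B Y).inv := by
    rw [← BraidedCategory.braiding_naturality_right_assoc, Iso.hom_inv_id, Category.comp_id]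
  rw [this, F.map_comp, F.map_comp, isIso_comp_left_iff, isIso_comp_right_iff]

lemma ihom_obj_mem_essImage {C D : Type*} [Category* C] [Category* D] [MonoidalCategory C]
    [MonoidalClosed C] {ι : D ⥤ C} [Reflective ι] (B : C) {E : C} (hE : ι.essImage E)
    [IsIso ((reflector ι).map (B ◁ (reflectorAdjunction ι).unit.app ((ihom B).obj E)))] :
    ι.essImage ((ihom B).obj E) := by
  set η := (reflectorAdjunction ι).unit
  have hloc : ι.essImage.isLocal (B ◁ η.app ((ihom B).obj E)) :=
    ((reflectorAdjunction ι).isLocal_essImage_iff_isIso_map _).2 inferInstance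
  obtain ⟨g, hg : B ◁ _ ≫ g = _⟩ := (hloc E hE).2 ((ihom.ev B).app E)
  have : IsSplitMono (η.app ((ihom B).obj E)) := IsSplitMono.mk' ⟨curry g, by
    rw [← curry_natural_left, hg, ← uncurry_id_eq_ev, curry_uncurry]; rfl⟩
  exact mem_essImage_of_unit_isSplitMono

end CategoryTheory

theorem stmt1 {C : Type u} [Category.{v} C] {D : Type u'} [Category.{v'} D]
    [MonoidalCategory C] [SymmetricCategory C] [MonoidalClosed C]
    (ι : D ⥤ C) [Reflective ι]
    (h : ∀ B B' : C,
      IsIso ((reflector ι).map ((reflectorAdjunction ι).unit.app B ⊗ₘ 𝟙 B')))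
    (B E : C) (hE : IsIso ((reflectorAdjunction ι).unit.app E)) :
    IsIso ((reflectorAdjunction ι).unit.app ((ihom B).obj E)) := by
  have := (isIso_map_whiskerLeft_iff (reflector ι) B _).2
    (by simpa only [tensorHom_id] using h ((ihom B).obj E) B)
  rw [Adjunction.isIso_unit_app_iff_mem_essImage] at hE ⊢
  exact ihom_obj_mem_essImage B hE
end

section
/- Let C be a monoidal biclosed category (i.e. both - ⊗ B and B ⊗ - have right adjoints C/ - and -\C) and D a reflective full subcategory with reflector ψ and unit η. The following are equivalent: (1) for all B in C and E local, both E/B and B\E are local; (2) ψ(η ⊗ 1) and ψ(1 ⊗ η) are isomorphisms for all objects; (3) ψ(η ⊗ η) : ψ(B ⊗ B') → ψ(ψB ⊗ ψB') is an isomorphism for all objects. -/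
/-!
A morphism `f` is inverted by the reflector `ψ` exactly when precomposition with `f` is bijective
on maps into every local object. For an adjunction `F ⊣ G` on `C` this turns "`ψ (F η_A)` is
invertible" into "precomposition with `η_A` is bijective on maps into `G E`", which for all `A`
says that `G E` is local. Applied to `(-) ⊗ B ⊣ (-)/B` and `B ⊗ (-) ⊣ B\(-)` this is
(1) ⇔ (2). For (2) ⇔ (3), factor `η ⊗ η` into the two whiskered units; the converse uses
that the unit is invertible at the local objects `ψB`.
-/

open CategoryTheory MonoidalCategory

universe v u v' u'

namespace CategoryTheory

variable {C : Type u} [Category.{v} C]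

lemma Adjunction.bijective_precomp_map_iff {D : Type u'} [Category.{v'} D] {F : C ⥤ D}
    {G : D ⥤ C} (adj : F ⊣ G) {X Y : C} (f : X ⟶ Y) (Z : D) :
    Function.Bijective (fun g : F.obj Y ⟶ Z => F.map f ≫ g) ↔
      Function.Bijective (fun g : Y ⟶ G.obj Z => f ≫ g) := by
  have : (fun g : F.obj Y ⟶ Z => F.map f ≫ g) =
      (adj.homEquiv X Z).symm ∘ (fun g : Y ⟶ G.obj Z => f ≫ g) ∘ adj.homEquiv Y Z := by
    funext g
    simp [Adjunction.homEquiv_naturality_left_symm]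
  rw [this, EquivLike.comp_bijective, EquivLike.bijective_comp]

section Reflective

variable {D : Type u'} [Category.{v'} D] (ι : D ⥤ C) [Reflective ι]

lemma isIso_reflector_map_iff_isLocal {X Y : C} (f : X ⟶ Y) :
    IsIso ((reflector ι).map f) ↔ ι.essImage.isLocal f := by
  rw [← Functor.isoClosure_eq_essImage, ObjectProperty.isoClosure_isLocal]
  exact (ObjectProperty.isLocal_iff_isIso_map (reflectorAdjunction ι) f).symm

theorem Adjunction.isIso_unit_app_obj_iff_isIso_reflector_map_map_unit {F G : C ⥤ C}
    (adj : F ⊣ G) :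
    (∀ E, IsIso ((reflectorAdjunction ι).unit.app E) →
        IsIso ((reflectorAdjunction ι).unit.app (G.obj E))) ↔
      ∀ A, IsIso ((reflector ι).map (F.map ((reflectorAdjunction ι).unit.app A))) := by
  simp only [(reflectorAdjunction ι).isIso_unit_app_iff_mem_essImage,
    isIso_reflector_map_iff_isLocal, ObjectProperty.isLocal, adj.bijective_precomp_map_iff]
  constructor
  · intro hG A E hE
    exact (isIso_reflector_map_iff_isLocal ι _).1 inferInstance _ (hG E hE)
  · intro h E hE
    obtain ⟨r, hr⟩ := (h _ E hE).2 (𝟙 _)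
    have : IsSplitMono ((reflectorAdjunction ι).unit.app (G.obj E)) := .mk' ⟨r, hr⟩
    exact mem_essImage_of_unit_isSplitMono

end Reflective

section Monoidal

variable [MonoidalCategory C] {E : Type u'} [Category.{v'} E] (Φ : C ⥤ E) {T : C ⥤ C}
  (η : 𝟭 C ⟶ T)

lemma isIso_map_tensorHom_of_isIso_map_whisker
    (hright : ∀ B B', IsIso (Φ.map (η.app B ▷ B')))
    (hleft : ∀ B B', IsIso (Φ.map (B ◁ η.app B'))) (B B' : C) :
    IsIso (Φ.map (η.app B ⊗ₘ η.app B')) := by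
  rw [MonoidalCategory.tensorHom_def, Φ.map_comp]
  have := hright B B'
  have := hleft (T.obj B) B'
  infer_instance

variable {η} (hη : ∀ B, IsIso (η.app (T.obj B)))
  (h : ∀ B B', IsIso (Φ.map (η.app B ⊗ₘ η.app B')))
include hη h

lemma isIso_map_whiskerRight_of_isIso_map_tensorHom (B B' : C) :
    IsIso (Φ.map (η.app B ▷ B')) := by
  have hTB : IsIso (Φ.map (T.obj B ◁ η.app B')) := by
    have hcomp := h (T.obj B) B'
    rw [MonoidalCategory.tensorHom_def', Φ.map_comp] at hcomp
    exact (isIso_comp_right_iff _ (Φ.map (η.app (T.obj B) ▷ T.obj B'))).1 hcomp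
  have hcomp := h B B'
  rw [MonoidalCategory.tensorHom_def, Φ.map_comp] at hcomp
  exact (isIso_comp_right_iff _ (Φ.map (T.obj B ◁ η.app B'))).1 hcomp

lemma isIso_map_whiskerLeft_of_isIso_map_tensorHom (B B' : C) :
    IsIso (Φ.map (B ◁ η.app B')) := by
  have hTB' : IsIso (Φ.map (η.app B ▷ T.obj B')) := by
    have hcomp := h B (T.obj B')
    rw [MonoidalCategory.tensorHom_def, Φ.map_comp] at hcomp
    exact (isIso_comp_right_iff _ (Φ.map (T.obj B ◁ η.app (T.obj B')))).1 hcomp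
  have hcomp := h B B'
  rw [MonoidalCategory.tensorHom_def', Φ.map_comp] at hcomp
  exact (isIso_comp_right_iff _ (Φ.map (η.app B ▷ T.obj B'))).1 hcomp

end Monoidal

end CategoryTheory

theorem stmt4 {C : Type u} [Category.{v} C] {D : Type u'} [Category.{v'} D]
    [MonoidalCategory C] [MonoidalClosed C]
    (rihom : C → C ⥤ C) (radj : ∀ B : C, tensorRight B ⊣ rihom B)
    (ι : D ⥤ C) [Reflective ι] :
    ((∀ B E : C, IsIso ((reflectorAdjunction ι).unit.app E) →
        IsIso ((reflectorAdjunction ι).unit.app ((rihom B).obj E)) ∧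
        IsIso ((reflectorAdjunction ι).unit.app ((ihom B).obj E))) ↔
      (∀ B B' : C,
        IsIso ((reflector ι).map ((reflectorAdjunction ι).unit.app B ⊗ₘ 𝟙 B')) ∧
        IsIso ((reflector ι).map (𝟙 B ⊗ₘ (reflectorAdjunction ι).unit.app B')))) ∧
    ((∀ B B' : C,
        IsIso ((reflector ι).map ((reflectorAdjunction ι).unit.app B ⊗ₘ 𝟙 B')) ∧
        IsIso ((reflector ι).map (𝟙 B ⊗ₘ (reflectorAdjunction ι).unit.app B'))) ↔
      (∀ B B' : C,
        IsIso ((reflector ι).map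
          ((reflectorAdjunction ι).unit.app B ⊗ₘ (reflectorAdjunction ι).unit.app B')))) := by
  have hright := fun B => (radj B).isIso_unit_app_obj_iff_isIso_reflector_map_map_unit ι
  have hleft := fun B => (ihom.adjunction B).isIso_unit_app_obj_iff_isIso_reflector_map_map_unit ι
  have hlocal (B : C) : IsIso ((reflectorAdjunction ι).unit.app ((reflector ι ⋙ ι).obj B)) :=
    Functor.essImage.unit_isIso (ι.obj_mem_essImage _)
  simp only [tensorHom_id, id_tensorHom]
  refine ⟨?_, fun h => isIso_map_tensorHom_of_isIso_map_whisker _ _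
      (fun B B' => (h B B').1) (fun B B' => (h B B').2),
    fun h B B' => ⟨isIso_map_whiskerRight_of_isIso_map_tensorHom _ hlocal h B B',
      isIso_map_whiskerLeft_of_isIso_map_tensorHom _ hlocal h B B'⟩⟩
  simp only [imp_and, forall_and]
  rw [forall_comm (β := C) (p := fun B B' => IsIso ((reflector ι).map _))]
  exact and_congr (forall_congr' hright) (forall_congr' hleft)
end

section
/- Let C be a symmetric monoidal closed category, D a reflective full subcategory with reflector ψ such that ψ(η ⊗ 1) is always an isomorphism, and equip D with the tensor D ⊗_D D' = ψ(D ⊗ D'). Then for any three objects the canonical associator ψ(ψ(A ⊗ B) ⊗ C) ≅ ψ(A ⊗ ψ(B ⊗ C)) obtained from ψ(η ⊗ 1), ψ(1 ⊗ η) and the associator of C satisfies the pentagon identity. -/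
/-!
Morphisms out of `ψ c` are determined by their transposes `c ⟶ ι d`, and precomposing with a
morphism that `ψ` inverts loses nothing. Transpose both sides of the pentagon along the
`ψ`-invertible map `(η ▷ Y ≫ η) ▷ Z`. In transposed form the defining equation of the associator
reads `η ▷ C ≫ η ≫ ι a = α ≫ A ◁ η ≫ η`; with it and the naturality of `η` and `α`, each side
becomes a composite of associators of `C` followed by units, and the two agree by the pentagon
in `C`.
-/

open CategoryTheory MonoidalCategory

universe v u v' u'

variable {C : Type u} [Category.{v} C] {D : Type u'} [Category.{v'} D]
  [MonoidalCategory C] [SymmetricCategory C] [MonoidalClosed C]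

noncomputable abbrev rtensor (ι : D ⥤ C) [Reflective ι] (d d' : D) : D :=
  (reflector ι).obj (ι.obj d ⊗ ι.obj d')

noncomputable abbrev rtensorHom (ι : D ⥤ C) [Reflective ι] {d₁ d₂ d₁' d₂' : D}
    (f : d₁ ⟶ d₂) (g : d₁' ⟶ d₂') : rtensor ι d₁ d₁' ⟶ rtensor ι d₂ d₂' :=
  (reflector ι).map (ι.map f ⊗ₘ ι.map g)

namespace CategoryTheory

theorem Functor.isIso_map_whiskerRight_whiskerRight {C : Type*} [Category C] [MonoidalCategory C]
    {D : Type*} [Category D] (F : C ⥤ D) {B B' : C} (f : B ⟶ B') (Y Z : C)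
    [IsIso (F.map (f ▷ (Y ⊗ Z)))] : IsIso (F.map (f ▷ Y ▷ Z)) := by
  rw [(Iso.eq_comp_inv _).mpr (associator_naturality_left f Y Z), F.map_comp, F.map_comp]
  infer_instance

namespace Adjunction

variable {C : Type*} [Category C] {D : Type*} [Category D] {L : C ⥤ D} {G : D ⥤ C}
  (adj : L ⊣ G)

theorem hom_ext_of_isIso_map {c c' : C} {d : D} (u : c ⟶ c') [IsIso (L.map u)]
    {f g : L.obj c' ⟶ d} (h : u ≫ adj.unit.app c' ≫ G.map f = u ≫ adj.unit.app c' ≫ G.map g) :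
    f = g := by
  rw [← cancel_epi (L.map u)]
  apply (adj.homEquiv _ _).injective
  simpa [homEquiv_unit] using h

variable [MonoidalCategory C]

def IsInducedAssociator
    (a : ∀ A B C' : D, L.obj (G.obj (L.obj (G.obj A ⊗ G.obj B)) ⊗ G.obj C') ⟶
      L.obj (G.obj A ⊗ G.obj (L.obj (G.obj B ⊗ G.obj C')))) : Prop :=
  ∀ A B C' : D, L.map (adj.unit.app (G.obj A ⊗ G.obj B) ▷ G.obj C') ≫ a A B C' =
    L.map (α_ (G.obj A) (G.obj B) (G.obj C')).hom ≫
      L.map (G.obj A ◁ adj.unit.app (G.obj B ⊗ G.obj C'))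

variable {adj}
variable {a : ∀ A B C' : D, L.obj (G.obj (L.obj (G.obj A ⊗ G.obj B)) ⊗ G.obj C') ⟶
  L.obj (G.obj A ⊗ G.obj (L.obj (G.obj B ⊗ G.obj C')))}

theorem IsInducedAssociator.unit_whiskerRight_comp_unit_comp_map
    (ha : adj.IsInducedAssociator a) (A B C' : D) :
    adj.unit.app (G.obj A ⊗ G.obj B) ▷ G.obj C' ≫
        adj.unit.app (G.obj (L.obj (G.obj A ⊗ G.obj B)) ⊗ G.obj C') ≫ G.map (a A B C') =
      (α_ (G.obj A) (G.obj B) (G.obj C')).hom ≫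
        G.obj A ◁ adj.unit.app (G.obj B ⊗ G.obj C') ≫
          adj.unit.app (G.obj A ⊗ G.obj (L.obj (G.obj B ⊗ G.obj C'))) := by
  simpa only [Functor.id_obj, Functor.comp_obj, Functor.map_comp, unit_naturality_assoc,
    unit_naturality] using adj.unit.app _ ≫= congrArg G.map (ha A B C')

theorem IsInducedAssociator.pentagon
    (hinv : ∀ B B' : C, IsIso (L.map (adj.unit.app B ▷ B'))) (ha : adj.IsInducedAssociator a)
    (W X Y Z : D) :
    L.map (G.map (a W X Y) ▷ G.obj Z) ≫ a W (L.obj (G.obj X ⊗ G.obj Y)) Z ≫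
        L.map (G.obj W ◁ G.map (a X Y Z)) =
      a (L.obj (G.obj W ⊗ G.obj X)) Y Z ≫ a W X (L.obj (G.obj Y ⊗ G.obj Z)) := by
  have key := ha.unit_whiskerRight_comp_unit_comp_map
  let u := adj.unit.app (G.obj W ⊗ G.obj X) ▷ G.obj Y ≫
    adj.unit.app (G.obj (L.obj (G.obj W ⊗ G.obj X)) ⊗ G.obj Y)
  have : IsIso (L.map (u ▷ G.obj Z)) := by
    have := hinv (G.obj W ⊗ G.obj X) (G.obj Y ⊗ G.obj Z)
    have := L.isIso_map_whiskerRight_whiskerRight (adj.unit.app (G.obj W ⊗ G.obj X)) (G.obj Y)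
      (G.obj Z)
    have := hinv (G.obj (L.obj (G.obj W ⊗ G.obj X)) ⊗ G.obj Y) (G.obj Z)
    rw [comp_whiskerRight, Functor.map_comp]
    infer_instance
  refine adj.hom_ext_of_isIso_map (u ▷ G.obj Z) ?_
  have lhs : u ▷ G.obj Z ≫ adj.unit.app _ ≫ G.map (L.map (G.map (a W X Y) ▷ G.obj Z) ≫
      a W _ Z ≫ L.map (G.obj W ◁ G.map (a X Y Z))) =
      (α_ _ _ _).hom ▷ _ ≫ (α_ _ _ _).hom ≫ _ ◁ (α_ _ _ _).hom ≫ _ ◁ _ ◁ adj.unit.app _ ≫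
        _ ◁ adj.unit.app _ ≫ adj.unit.app _ := by
    have key₁ := congrArg (· ▷ G.obj Z) (key W X Y)
    have key₃ := congrArg (G.obj W ◁ ·) (key X Y Z)
    simp only [comp_whiskerRight, whiskerLeft_comp] at key₁ key₃
    simp only [u, Functor.comp_obj, Functor.map_comp, unit_naturality_assoc, comp_whiskerRight,
      Category.assoc]
    rw [reassoc_of% key₁, reassoc_of% key, unit_naturality, associator_naturality_middle_assoc,
      reassoc_of% key₃]
  have rhs : u ▷ G.obj Z ≫ adj.unit.app _ ≫ G.map (a _ Y Z ≫ a W X _) =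
      (α_ _ _ _).hom ≫ (α_ _ _ _).hom ≫ _ ◁ _ ◁ adj.unit.app _ ≫ _ ◁ adj.unit.app _ ≫
        adj.unit.app _ := by
    simp only [u, Functor.comp_obj, Functor.map_comp, comp_whiskerRight, Category.assoc]
    rw [reassoc_of% key, associator_naturality_left_assoc, ← whisker_exchange_assoc, key]
    simp only [Functor.id_obj, associator_naturality_right_assoc]
  rw [lhs, rhs, pentagon_assoc]

end Adjunction

end CategoryTheory

-- Since `ψ(η ▷ C)` is invertible, `ha` determines `a` as the paper's composite.
theorem stmt10 (ι : D ⥤ C) [Reflective ι]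
    (h1 : ∀ B B' : C,
      IsIso ((reflector ι).map ((reflectorAdjunction ι).unit.app B ⊗ₘ 𝟙 B')))
    (a : ∀ A B C' : D, rtensor ι (rtensor ι A B) C' ⟶ rtensor ι A (rtensor ι B C'))
    (ha : ∀ A B C' : D,
      (reflector ι).map
          ((reflectorAdjunction ι).unit.app (ι.obj A ⊗ ι.obj B) ⊗ₘ 𝟙 (ι.obj C')) ≫
        a A B C' =
      (reflector ι).map (α_ (ι.obj A) (ι.obj B) (ι.obj C')).hom ≫
        (reflector ι).map
          (𝟙 (ι.obj A) ⊗ₘ (reflectorAdjunction ι).unit.app (ι.obj B ⊗ ι.obj C')))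
    (W X Y Z : D) :
    rtensorHom ι (a W X Y) (𝟙 Z) ≫ a W (rtensor ι X Y) Z ≫
        rtensorHom ι (𝟙 W) (a X Y Z) =
      a (rtensor ι W X) Y Z ≫ a W X (rtensor ι Y Z) := by
  have hiso : ∀ B B' : C,
      IsIso ((reflector ι).map ((reflectorAdjunction ι).unit.app B ▷ B')) := by
    simpa only [tensorHom_id] using h1
  have hassoc : (reflectorAdjunction ι).IsInducedAssociator a := fun A B C' => by
    simpa only [tensorHom_id, id_tensorHom] using ha A B C'
  simpa only [rtensorHom, CategoryTheory.Functor.map_id, tensorHom_id, id_tensorHom] using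
    hassoc.pentagon hiso W X Y Z
end

section
/- Let C be monoidal biclosed, D reflective in C with reflector ψ and unit η, and suppose ψ(η ⊗ 1) and ψ(1 ⊗ η) are isomorphisms. Then for the reflected tensor on D, the isomorphisms hom_D(D ⊗_D D', D'') ≅ hom_C(D ⊗ D', D'') ≅ hom_C(D, D''/D') ≅ hom_D(D, D''/D') exhibit D''/D' (computed in C) as the right internal hom in D; in particular the internal homs of D are computed as in C. -/
/-!
If `F ⊣ H` is an adjunction on `C` and the reflector inverts `F η_X`, then every map
`F X ⟶ ι d''` factors through `F η_X`. For `X = H (ι d'')` factoring the counit and transposing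
gives a retraction of `η_X`, so `H (ι d'')` is local. Applied to `F = - ⊗ ι d'` and `F = ι d' ⊗ -`
this makes `d''/d'` and `d'\d''` local, and the hom-bijections are then composites of the two
adjunctions with `ι` being fully faithful.
-/

open CategoryTheory MonoidalCategory

universe v u v' u'

section

variable {C : Type u} [Category.{v} C] {D : Type u'} [Category.{v'} D] (ι : D ⥤ C) [Reflective ι]

lemma exists_comp_eq_of_isIso_reflector_map {A B : C} (f : A ⟶ B)
    [IsIso ((reflector ι).map f)] {d : D} (g : A ⟶ ι.obj d) :
    ∃ k : B ⟶ ι.obj d, f ≫ k = g := by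
  let adj := reflectorAdjunction ι
  refine ⟨adj.homEquiv _ _ (inv ((reflector ι).map f) ≫ (adj.homEquiv _ _).symm g), ?_⟩
  rw [← adj.homEquiv_naturality_left, IsIso.hom_inv_id_assoc, Equiv.apply_symm_apply]

lemma isIso_unit_app_of_isIso_reflector_map {F H : C ⥤ C} (adj : F ⊣ H) (d : D)
    (hF : IsIso ((reflector ι).map
      (F.map ((reflectorAdjunction ι).unit.app (H.obj (ι.obj d)))))) :
    IsIso ((reflectorAdjunction ι).unit.app (H.obj (ι.obj d))) := by
  obtain ⟨k, hk⟩ := exists_comp_eq_of_isIso_reflector_map ι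
    (F.map ((reflectorAdjunction ι).unit.app (H.obj (ι.obj d)))) (adj.counit.app (ι.obj d))
  have retraction : (reflectorAdjunction ι).unit.app (H.obj (ι.obj d)) ≫ adj.homEquiv _ _ k =
      𝟙 _ := by
    rw [← adj.homEquiv_naturality_left, hk, Adjunction.homEquiv_unit]
    exact adj.right_triangle_components (ι.obj d)
  have : IsSplitMono ((reflectorAdjunction ι).unit.app (H.obj (ι.obj d))) :=
    IsSplitMono.mk' ⟨_, retraction⟩
  exact Functor.essImage.unit_isIso mem_essImage_of_unit_isSplitMono

noncomputable def reflectorHomEquivOfIsIsoUnit {F H : C ⥤ C} (adj : F ⊣ H) (d d'' : D)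
    [IsIso ((reflectorAdjunction ι).unit.app (H.obj (ι.obj d'')))] :
    ((reflector ι).obj (F.obj (ι.obj d)) ⟶ d'') ≃
      (d ⟶ (reflector ι).obj (H.obj (ι.obj d''))) :=
  ((reflectorAdjunction ι).homEquiv _ _).trans <| (adj.homEquiv _ _).trans <|
    ((Iso.refl _).homCongr (asIso ((reflectorAdjunction ι).unit.app _))).trans
      (Functor.fullyFaithfulOfReflective ι).homEquiv.symm

end

theorem stmt13 {C : Type u} [Category.{v} C] {D : Type u'} [Category.{v'} D]
    [MonoidalCategory C] [MonoidalClosed C]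
    (rihom : C → C ⥤ C) (radj : ∀ B : C, tensorRight B ⊣ rihom B)
    (ι : D ⥤ C) [Reflective ι]
    (h1 : ∀ B B' : C,
      IsIso ((reflector ι).map ((reflectorAdjunction ι).unit.app B ⊗ₘ 𝟙 B')))
    (h2 : ∀ B B' : C,
      IsIso ((reflector ι).map (𝟙 B ⊗ₘ (reflectorAdjunction ι).unit.app B')))
    (d d' d'' : D) :
    IsIso ((reflectorAdjunction ι).unit.app ((rihom (ι.obj d')).obj (ι.obj d''))) ∧
    IsIso ((reflectorAdjunction ι).unit.app ((ihom (ι.obj d')).obj (ι.obj d''))) ∧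
    Nonempty
      (((reflector ι).obj (ι.obj d ⊗ ι.obj d') ⟶ d'') ≃
        (ι.obj d ⊗ ι.obj d' ⟶ ι.obj d'')) ∧
    Nonempty
      ((ι.obj d ⊗ ι.obj d' ⟶ ι.obj d'') ≃
        (ι.obj d ⟶ (rihom (ι.obj d')).obj (ι.obj d''))) ∧
    Nonempty
      (((reflector ι).obj (ι.obj d ⊗ ι.obj d') ⟶ d'') ≃
        (d ⟶ (reflector ι).obj ((rihom (ι.obj d')).obj (ι.obj d'')))) ∧
    Nonempty
      (((reflector ι).obj (ι.obj d' ⊗ ι.obj d) ⟶ d'') ≃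
        (d ⟶ (reflector ι).obj ((ihom (ι.obj d')).obj (ι.obj d'')))) := by
  have : IsIso ((reflectorAdjunction ι).unit.app ((rihom (ι.obj d')).obj (ι.obj d''))) := by
    refine isIso_unit_app_of_isIso_reflector_map ι (radj (ι.obj d')) d'' ?_
    have h := h1 ((rihom (ι.obj d')).obj (ι.obj d'')) (ι.obj d')
    rwa [tensorHom_id] at h
  have : IsIso ((reflectorAdjunction ι).unit.app ((ihom (ι.obj d')).obj (ι.obj d''))) := by
    refine isIso_unit_app_of_isIso_reflector_map ι (ihom.adjunction (ι.obj d')) d'' ?_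
    have h := h2 (ι.obj d') ((ihom (ι.obj d')).obj (ι.obj d''))
    rwa [id_tensorHom] at h
  exact ⟨inferInstance, inferInstance, ⟨(reflectorAdjunction ι).homEquiv _ _⟩,
    ⟨(radj (ι.obj d')).homEquiv _ _⟩,
    ⟨reflectorHomEquivOfIsIsoUnit ι (radj (ι.obj d')) d d''⟩,
    ⟨reflectorHomEquivOfIsIsoUnit ι (ihom.adjunction (ι.obj d')) d d''⟩⟩
end

section
/- Let C be a symmetric monoidal closed category and D a reflective full subcategory with reflector ψ. If every internal hom [B, E] with E local is local, then the full subcategory D is an exponential ideal for the internal hom, and the reflector ψ : C → D preserves the monoidal unit up to the universal map, the composite ψ(B ⊗ B') → ψ(ψB ⊗ ψB') being invertible; consequently the idempotent monad ψ is a symmetric monoidal (Hopf-type strong) monad for the tensor on C. -/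
/-!
Because `[B, E]` is local whenever `E` is, currying shows that maps `ψB ⊗ ψB' ⟶ E` into a local
object `E` correspond bijectively to their restrictions along `η ⊗ η`, i.e. that `ψ(η ⊗ η)` is
invertible (Day's reflection theorem). The comparison `TB ⊗ TB' ⟶ T(B ⊗ B')` is then the
unique map restricting to `η` along `η ⊗ η`, and every coherence law is an equation between maps
into local objects, so it can be checked after restricting along `η ⊗ η`, where it reduces to
naturality of `η` and the triangle identities.
-/

open CategoryTheory MonoidalCategory

universe v u v' u'

namespace CategoryTheory.Adjunction

variable {C : Type*} [Category C] {D : Type*} [Category D] {L : C ⥤ D} {R : D ⥤ C}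

lemma eq_of_comp_eq_of_isIso_map (adj : L ⊣ R) {X Y : C} (f : X ⟶ Y) [IsIso (L.map f)] {d : D}
    {p q : Y ⟶ R.obj d} (h : f ≫ p = f ≫ q) : p = q := by
  apply (adj.homEquiv Y d).symm.injective
  rw [← cancel_epi (L.map f), ← adj.homEquiv_naturality_left_symm,
    ← adj.homEquiv_naturality_left_symm, h]

section TensorComparison

variable (adj : L ⊣ R) [MonoidalCategory C]
  [∀ B B' : C, IsIso (L.map (adj.unit.app B ⊗ₘ adj.unit.app B'))]

noncomputable def tensorComparison (B B' : C) :
    (L ⋙ R).obj B ⊗ (L ⋙ R).obj B' ⟶ (L ⋙ R).obj (B ⊗ B') :=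
  adj.unit.app _ ≫ R.map (inv (L.map (adj.unit.app B ⊗ₘ adj.unit.app B')))

lemma unit_tensorHom_unit_comp_tensorComparison (B B' : C) :
    (adj.unit.app B ⊗ₘ adj.unit.app B' : B ⊗ B' ⟶ _) ≫ adj.tensorComparison B B' =
      adj.unit.app (B ⊗ B') := by
  rw [tensorComparison, ← Category.assoc, ← adj.unit_naturality, Category.assoc,
    ← R.map_comp, IsIso.hom_inv_id, R.map_id, Category.comp_id]

lemma tensorComparison_natural {B₁ B₂ B₁' B₂' : C} (f : B₁ ⟶ B₂) (g : B₁' ⟶ B₂') :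
    ((L ⋙ R).map f ⊗ₘ (L ⋙ R).map g) ≫ adj.tensorComparison B₂ B₂' =
      adj.tensorComparison B₁ B₁' ≫ (L ⋙ R).map (f ⊗ₘ g) := by
  apply adj.eq_of_comp_eq_of_isIso_map (adj.unit.app B₁ ⊗ₘ adj.unit.app B₁' : B₁ ⊗ B₁' ⟶ _)
  rw [reassoc_of% adj.unit_tensorHom_unit_comp_tensorComparison, tensorHom_comp_tensorHom_assoc]
  simp only [Functor.comp_map, adj.unit_naturality]
  rw [← tensorHom_comp_tensorHom_assoc, unit_tensorHom_unit_comp_tensorComparison]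

lemma tensorComparison_comp_map_tensorComparison_comp_counit (B B' : C) :
    adj.tensorComparison ((L ⋙ R).obj B) ((L ⋙ R).obj B') ≫
        (L ⋙ R).map (adj.tensorComparison B B') ≫ R.map (adj.counit.app (L.obj (B ⊗ B'))) =
      (R.map (adj.counit.app (L.obj B)) ⊗ₘ R.map (adj.counit.app (L.obj B'))) ≫
        adj.tensorComparison B B' := by
  apply adj.eq_of_comp_eq_of_isIso_map
    (adj.unit.app ((L ⋙ R).obj B) ⊗ₘ adj.unit.app ((L ⋙ R).obj B') :
      (L ⋙ R).obj B ⊗ (L ⋙ R).obj B' ⟶ _)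
  have triangle (X : C) : adj.unit.app ((L ⋙ R).obj X) ≫ R.map (adj.counit.app (L.obj X)) =
      𝟙 ((L ⋙ R).obj X) :=
    adj.right_triangle_components (L.obj X)
  rw [reassoc_of% adj.unit_tensorHom_unit_comp_tensorComparison, Functor.comp_map,
    adj.unit_naturality_assoc, triangle, Category.comp_id, tensorHom_comp_tensorHom_assoc,
    triangle, triangle, id_tensorHom_id, Category.id_comp]

end TensorComparison

end CategoryTheory.Adjunction

open Adjunction in
theorem stmt15 {C : Type u} [Category.{v} C] {D : Type u'} [Category.{v'} D]
    [MonoidalCategory C] [SymmetricCategory C] [MonoidalClosed C]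
    (ι : D ⥤ C) [Reflective ι]
    (hideal : ∀ B E : C, IsIso ((reflectorAdjunction ι).unit.app E) →
      IsIso ((reflectorAdjunction ι).unit.app ((ihom B).obj E))) :
    (∀ B B' : C,
      IsIso ((reflector ι).map
        ((reflectorAdjunction ι).unit.app B ⊗ₘ (reflectorAdjunction ι).unit.app B'))) ∧
    ∃ μ : ∀ B B' : C,
      (reflector ι ⋙ ι).obj B ⊗ (reflector ι ⋙ ι).obj B' ⟶
        (reflector ι ⋙ ι).obj (B ⊗ B'),
      (∀ {B₁ B₂ B₁' B₂' : C} (f : B₁ ⟶ B₂) (g : B₁' ⟶ B₂'),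
        ((reflector ι ⋙ ι).map f ⊗ₘ (reflector ι ⋙ ι).map g) ≫ μ B₂ B₂' =
          μ B₁ B₁' ≫ (reflector ι ⋙ ι).map (f ⊗ₘ g)) ∧
      (∀ B B' : C,
        ((reflectorAdjunction ι).unit.app B ⊗ₘ (reflectorAdjunction ι).unit.app B') ≫
            μ B B' =
          (reflectorAdjunction ι).unit.app (B ⊗ B')) ∧
      (∀ B B' : C,
        μ ((reflector ι ⋙ ι).obj B) ((reflector ι ⋙ ι).obj B') ≫
            (reflector ι ⋙ ι).map (μ B B') ≫
            ((reflectorAdjunction ι).toMonad.μ.app (B ⊗ B')) =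
          (((reflectorAdjunction ι).toMonad.μ.app B) ⊗ₘ
            ((reflectorAdjunction ι).toMonad.μ.app B')) ≫ μ B B') := by
  have hDay : ∀ B B' : C, IsIso ((reflector ι).map
      ((reflectorAdjunction ι).unit.app B ⊗ₘ (reflectorAdjunction ι).unit.app B')) :=
    ((Monoidal.Reflective.isIso_tfae (reflectorAdjunction ι)).out 0 3).mp
      fun E B => hideal B (ι.obj E) inferInstance
  exact ⟨hDay, tensorComparison _, tensorComparison_natural _,
    unit_tensorHom_unit_comp_tensorComparison _,
    tensorComparison_comp_map_tensorComparison_comp_counit _⟩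
end
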